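/- arXiv:2510.13673 — 2 statements merged into one kernel-verified Lean document; each statement's English description precedes it below -/
import Mathlib

section
/- Let p be a prime, let G be a group, and let g₁, g₂ ∈ G be elements such that the commutator g₁^{−p} g₂^{−1} g₁^{p} g₂ is a p²-th power in G. Let J be the augmentation ideal of the group ring ℤ[G], i.e. the kernel of the ring homomorphism ℤ[G] → ℤ sending every element of G to 1. Then the ring commutator g₁^p g₂ − g₂ g₁^p lies in the ideal p²J + pJ^p + J^{p²}. -/
open Pointwise

/-- The augmentation ideal of the group ring `ℤ[G]`: the kernel of the ring
homomorphism `ℤ[G] → ℤ` sending every element of `G` to `1`, viewed as a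
`ℤ`-submodule (so that its powers make sense in the noncommutative ring `ℤ[G]`). -/
noncomputable def augIdeal (G : Type*) [Group G] : Submodule ℤ (MonoidAlgebra ℤ G) :=
  LinearMap.ker (MonoidAlgebra.lift ℤ ℤ G 1).toLinearMap

section Aux

variable {G : Type*} [Group G]

lemma augIdeal_mem_iff {x : MonoidAlgebra ℤ G} :
    x ∈ augIdeal G ↔ ((MonoidAlgebra.lift ℤ ℤ G) 1 : MonoidAlgebra ℤ G →ₐ[ℤ] ℤ) x = 0 :=
  Iff.rfl

lemma of_sub_one_mem (g : G) : MonoidAlgebra.of ℤ G g - 1 ∈ augIdeal G := by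
  rw [augIdeal_mem_iff]
  set f : MonoidAlgebra ℤ G →ₐ[ℤ] ℤ := (MonoidAlgebra.lift ℤ ℤ G) 1 with hf
  rw [map_sub, map_one, hf, MonoidAlgebra.lift_of]
  simp

lemma augIdeal_mul_le : augIdeal G * augIdeal G ≤ augIdeal G := by
  rw [Submodule.mul_le]
  intro x hx y hy
  rw [augIdeal_mem_iff] at *
  set f : MonoidAlgebra ℤ G →ₐ[ℤ] ℤ := (MonoidAlgebra.lift ℤ ℤ G) 1 with hf
  rw [map_mul, hx, zero_mul]

lemma augIdeal_pow_succ_le (m : ℕ) (hm : 1 ≤ m) :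
    augIdeal G ^ (m + 1) ≤ augIdeal G ^ m := by
  induction m with
  | zero => omega
  | succ n ih =>
    rcases Nat.eq_zero_or_pos n with rfl | h
    · show augIdeal G ^ 2 ≤ augIdeal G ^ 1
      rw [pow_two, pow_one]
      exact augIdeal_mul_le
    · rw [pow_succ (augIdeal G) (n + 1), pow_succ (augIdeal G) n]
      exact Submodule.mul_le.mpr fun a ha b hb => Submodule.mul_mem_mul (ih h ha) hb

lemma augIdeal_pow_le {m n : ℕ} (hm : 1 ≤ m) (hmn : m ≤ n) :
    augIdeal G ^ n ≤ augIdeal G ^ m := by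
  induction n with
  | zero => omega
  | succ k ih =>
    rcases Nat.eq_or_lt_of_le hmn with h | h
    · rw [h]
    · exact le_trans (augIdeal_pow_succ_le k (by omega)) (ih (by omega))

lemma augIdeal_pow_mul_mem_left :
    ∀ n : ℕ, 1 ≤ n → ∀ r x : MonoidAlgebra ℤ G, x ∈ augIdeal G ^ n →
      r * x ∈ augIdeal G ^ n := by
  intro n
  induction n with
  | zero => omega
  | succ m ih =>
    intro _ r x hx
    rcases Nat.eq_zero_or_pos m with rfl | h
    · rw [show (0 : ℕ) + 1 = 1 from rfl, pow_one] at hx ⊢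
      rw [augIdeal_mem_iff] at *
      set f : MonoidAlgebra ℤ G →ₐ[ℤ] ℤ := (MonoidAlgebra.lift ℤ ℤ G) 1 with hf
      rw [map_mul, hx, mul_zero]
    · rw [pow_succ] at hx ⊢
      refine Submodule.mul_induction_on hx (fun a ha b hb => ?_) (fun a b ha hb => ?_)
      · rw [← mul_assoc]
        exact Submodule.mul_mem_mul (ih h r a ha) hb
      · rw [mul_add]; exact add_mem ha hb

/-- The target submodule absorbs left multiplication by arbitrary ring elements. -/
lemma target_mul_mem_left (p : ℕ) (hp : 1 ≤ p) (r : MonoidAlgebra ℤ G)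
    {x : MonoidAlgebra ℤ G}
    (hx : x ∈ ((p : ℤ) ^ 2) • augIdeal G + (p : ℤ) • augIdeal G ^ p + augIdeal G ^ p ^ 2) :
    r * x ∈ ((p : ℤ) ^ 2) • augIdeal G + (p : ℤ) • augIdeal G ^ p + augIdeal G ^ p ^ 2 := by
  obtain ⟨y, hy, z, hz, rfl⟩ := Submodule.mem_sup.mp hx
  obtain ⟨a, ha, b, hb, rfl⟩ := Submodule.mem_sup.mp hy
  rw [mul_add, mul_add]
  refine add_mem (add_mem ?_ ?_) ?_
  · obtain ⟨a', ha', rfl⟩ := Set.mem_smul_set.mp ha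
    refine Submodule.mem_sup_left (Submodule.mem_sup_left ?_)
    rw [mul_smul_comm]
    exact Submodule.smul_mem_pointwise_smul _ _ _
      (by simpa using augIdeal_pow_mul_mem_left 1 le_rfl r a' (by simpa using ha'))
  · obtain ⟨b', hb', rfl⟩ := Set.mem_smul_set.mp hb
    refine Submodule.mem_sup_left (Submodule.mem_sup_right ?_)
    rw [mul_smul_comm]
    exact Submodule.smul_mem_pointwise_smul _ _ _
      (augIdeal_pow_mul_mem_left p hp r b' hb')
  · exact Submodule.mem_sup_right
      (augIdeal_pow_mul_mem_left (p ^ 2) (Nat.one_le_pow _ _ (by omega)) r z hz)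

end Aux

lemma choose_p_sq_dvd (p : ℕ) (hp : p.Prime) {k : ℕ} (hk : 1 ≤ k) (hkp : k < p) :
    p ^ 2 ∣ (p ^ 2).choose k := by
  have key : p ^ 2 * (p ^ 2 - 1).choose (k - 1) = (p ^ 2).choose k * k := by
    have := Nat.add_one_mul_choose_eq (p ^ 2 - 1) (k - 1)
    have h1 : p ^ 2 - 1 + 1 = p ^ 2 := Nat.succ_pred_eq_of_pos (pow_pos hp.pos 2)
    have h2 : k - 1 + 1 = k := Nat.succ_pred_eq_of_pos hk
    simpa [Nat.succ_eq_add_one, h1, h2] using this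
  have hcop : Nat.Coprime (p ^ 2) k :=
    Nat.Coprime.pow_left 2 (Nat.coprime_of_lt_prime (by omega) hkp hp)
  exact hcop.dvd_of_dvd_mul_right ⟨_, key.symm⟩

/-- If the commutator `(g₁^p)⁻¹ g₂⁻¹ g₁^p g₂` is a `p²`-th power in `G`, then the
ring commutator `g₁^p g₂ − g₂ g₁^p` in `ℤ[G]` lies in `p²J + pJ^p + J^{p²}`,
where `J` is the augmentation ideal. -/
theorem ring_commutator_pow_mem (p : ℕ) (hp : p.Prime) (G : Type*) [Group G]
    (g₁ g₂ : G) (hcomm : ∃ z : G, (g₁ ^ p)⁻¹ * g₂⁻¹ * g₁ ^ p * g₂ = z ^ p ^ 2) :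
    MonoidAlgebra.of ℤ G (g₁ ^ p) * MonoidAlgebra.of ℤ G g₂ -
        MonoidAlgebra.of ℤ G g₂ * MonoidAlgebra.of ℤ G (g₁ ^ p) ∈
      ((p : ℤ) ^ 2) • augIdeal G + (p : ℤ) • augIdeal G ^ p + augIdeal G ^ p ^ 2 := by
  obtain ⟨z, hz⟩ := hcomm
  have hgrp : g₁ ^ p * g₂ = g₂ * g₁ ^ p * z ^ p ^ 2 := by
    rw [← hz]; group
  set J := augIdeal G with hJ
  set c : MonoidAlgebra ℤ G := MonoidAlgebra.of ℤ G z with hc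
  set x : MonoidAlgebra ℤ G := c - 1 with hx
  have hxJ : x ∈ J := of_sub_one_mem z
  -- reduce to showing c^{p²} - 1 ∈ M
  have key : c ^ p ^ 2 - 1 ∈ ((p : ℤ) ^ 2) • J + (p : ℤ) • J ^ p + J ^ p ^ 2 := by
    have hexp : c ^ p ^ 2 - 1 =
        ∑ i ∈ Finset.range (p ^ 2),
          x ^ (i + 1) * ((p ^ 2).choose (i + 1) : MonoidAlgebra ℤ G) := by
      have hcpow : c ^ p ^ 2 = (x + 1) ^ p ^ 2 := by rw [hx, sub_add_cancel]
      rw [hcpow, Commute.add_pow (Commute.one_right x), Finset.sum_range_succ']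
      simp
    rw [hexp]
    refine Submodule.sum_mem _ fun i hi => ?_
    have hi' : i < p ^ 2 := Finset.mem_range.mp hi
    set k := i + 1 with hk
    have hk1 : 1 ≤ k := by omega
    have hk2 : k ≤ p ^ 2 := by omega
    have hknc : x ^ k * ((p ^ 2).choose k : MonoidAlgebra ℤ G)
        = (((p ^ 2).choose k : ℤ)) • x ^ k := by
      rw [zsmul_eq_mul, Int.cast_natCast, (Nat.cast_commute ((p ^ 2).choose k) (x ^ k)).eq]
    rw [hknc]
    rcases lt_or_ge k p with hkp | hkp
    · -- k < p : p² divides the binomial coefficient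
      obtain ⟨m, hm⟩ := choose_p_sq_dvd p hp hk1 hkp
      refine Submodule.mem_sup_left (Submodule.mem_sup_left ?_)
      rw [hm]
      push_cast
      rw [mul_smul]
      refine Submodule.smul_mem_pointwise_smul _ _ _ (Submodule.smul_mem _ _ ?_)
      have := augIdeal_pow_le (le_refl 1) hk1 (Submodule.pow_mem_pow _ hxJ k)
      simpa using this
    · rcases Nat.eq_or_lt_of_le hk2 with hkeq | hklt
      · -- k = p² : use J^{p²}
        refine Submodule.mem_sup_right ?_
        rw [hkeq]
        simp only [Nat.choose_self, Nat.cast_one, one_smul]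
        exact Submodule.pow_mem_pow _ hxJ _
      · -- p ≤ k < p² : p divides the binomial coefficient, use p • J^p
        obtain ⟨m, hm⟩ := Nat.Prime.dvd_choose_pow (n := 2) (k := k) hp (by omega) (by omega)
        refine Submodule.mem_sup_left (Submodule.mem_sup_right ?_)
        rw [hm]
        push_cast
        rw [mul_smul]
        exact Submodule.smul_mem_pointwise_smul _ _ _
          (Submodule.smul_mem _ _ (augIdeal_pow_le hp.one_lt.le hkp (Submodule.pow_mem_pow _ hxJ k)))
  have heq : MonoidAlgebra.of ℤ G (g₁ ^ p) * MonoidAlgebra.of ℤ G g₂ -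
      MonoidAlgebra.of ℤ G g₂ * MonoidAlgebra.of ℤ G (g₁ ^ p)
      = MonoidAlgebra.of ℤ G g₂ * MonoidAlgebra.of ℤ G (g₁ ^ p) * (c ^ p ^ 2 - 1) := by
    rw [mul_sub, mul_one]
    congr 1
    rw [hc, ← map_pow, ← map_mul, ← map_mul, ← map_mul, hgrp]
  rw [heq]
  exact target_mul_mem_left p hp.one_lt.le _ key
end

section
/- Let p be a prime and let G be a group in which every commutator x⁻¹y⁻¹xy (for x, y ∈ G) is a p-th power in G. Let g₁, g₂ ∈ G be elements such that the commutator g₁^{−p} g₂^{−1} g₁^{p} g₂ is a p²-th power in G. Let J be the augmentation ideal of the group ring ℤ[G], i.e. the kernel of the ring homomorphism ℤ[G] → ℤ sending every element of G to 1. Then the ring commutator (g₁ − 1)^p (g₂ − 1) − (g₂ − 1)(g₁ − 1)^p lies in the ideal p²J + J^p + J^{p²}. -/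
open Pointwise

section Aux
variable {G : Type*} [Group G]

noncomputable def aug (G : Type*) [Group G] : MonoidAlgebra ℤ G →ₐ[ℤ] ℤ :=
  MonoidAlgebra.lift ℤ ℤ G 1

lemma mem_augIdeal_iff (x : MonoidAlgebra ℤ G) :
    x ∈ augIdeal G ↔ aug G x = 0 := Iff.rfl

lemma aug_of (g : G) : aug G (MonoidAlgebra.of ℤ G g) = 1 := by
  rw [aug, MonoidAlgebra.lift_of]; rfl

lemma augIdeal_mul_mem_left (r : MonoidAlgebra ℤ G) {x : MonoidAlgebra ℤ G}
    (hx : x ∈ augIdeal G) : r * x ∈ augIdeal G := by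
  rw [mem_augIdeal_iff] at hx ⊢
  rw [map_mul, hx, mul_zero]

lemma augIdeal_mul_mem_right (r : MonoidAlgebra ℤ G) {x : MonoidAlgebra ℤ G}
    (hx : x ∈ augIdeal G) : x * r ∈ augIdeal G := by
  rw [mem_augIdeal_iff] at hx ⊢
  rw [map_mul, hx, zero_mul]

lemma augIdeal_pow_mul_mem {k : ℕ} (hk : 1 ≤ k) {x : MonoidAlgebra ℤ G}
    (hx : x ∈ augIdeal G ^ k) (r : MonoidAlgebra ℤ G) : x * r ∈ augIdeal G ^ k := by
  induction k with
  | zero => omega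
  | succ k ih =>
    rcases Nat.eq_or_lt_of_le hk with h1 | h1
    · rw [← h1, pow_one] at hx ⊢
      exact augIdeal_mul_mem_right r hx
    · rw [pow_succ] at hx ⊢
      refine Submodule.mul_induction_on hx (fun a ha b hb => ?_) (fun a b ha hb => ?_)
      · rw [mul_assoc]
        exact Submodule.mul_mem_mul ha (augIdeal_mul_mem_right r hb)
      · rw [add_mul]; exact Submodule.add_mem _ ha hb

lemma augIdeal_pow_le_pow {n m : ℕ} (hn : 1 ≤ n) (hnm : n ≤ m) :
    augIdeal G ^ m ≤ augIdeal G ^ n := by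
  induction m with
  | zero => omega
  | succ m ih =>
    rcases Nat.eq_or_lt_of_le hnm with h1 | h1
    · rw [h1]
    · have hm : n ≤ m := by omega
      refine le_trans ?_ (ih hm)
      rw [pow_succ, Submodule.mul_le]
      intro a ha b hb
      exact augIdeal_pow_mul_mem (le_trans hn hm) ha b

lemma augIdeal_le_span :
    augIdeal G ≤ Submodule.span ℤ {x | ∃ g : G, MonoidAlgebra.of ℤ G g - 1 = x} := by
  intro f hf
  rw [mem_augIdeal_iff] at hf
  have key : ∀ y : MonoidAlgebra ℤ G, y - (aug G y) • (1 : MonoidAlgebra ℤ G) ∈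
      Submodule.span ℤ {x | ∃ g : G, MonoidAlgebra.of ℤ G g - 1 = x} := by
    intro y
    induction y using MonoidAlgebra.induction_on with
    | of g => rw [aug_of, one_smul]; exact Submodule.subset_span ⟨g, rfl⟩
    | add x y hx hy =>
      have := Submodule.add_mem _ hx hy
      rw [map_add, add_smul]; convert this using 1; abel
    | smul r x hx =>
      have := Submodule.smul_mem _ r hx
      rw [map_smul, smul_eq_mul, mul_smul, ← smul_sub]; exact this
  simpa [hf] using key f

end Aux

section Main
variable {G : Type*} [Group G]

lemma sq_dvd_choose {p k : ℕ} (hp : p.Prime) (h1 : 1 ≤ k) (h2 : k < p) :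
    (p : ℤ) ^ 2 ∣ ((p ^ 2).choose k : ℤ) := by
  have hid : p ^ 2 * (p ^ 2 - 1).choose (k - 1) = (p ^ 2).choose k * k := by
    have h := Nat.add_one_mul_choose_eq (p ^ 2 - 1) (k - 1)
    have hp2 : 1 ≤ p ^ 2 := Nat.one_le_pow _ _ hp.pos
    have e1 : p ^ 2 - 1 + 1 = p ^ 2 := by omega
    have e2 : k - 1 + 1 = k := by omega
    rwa [e1, e2] at h
  have hpk : Nat.Coprime p k := by
    refine (Nat.Prime.coprime_iff_not_dvd hp).mpr fun hd => ?_
    exact absurd (Nat.le_of_dvd (by omega) hd) (by omega)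
  have hcop : Nat.Coprime (p ^ 2) k := Nat.Coprime.pow_left 2 hpk
  have hn : p ^ 2 ∣ (p ^ 2).choose k :=
    (Nat.Coprime.dvd_of_dvd_mul_right hcop ⟨(p ^ 2 - 1).choose (k - 1), by omega⟩)
  exact_mod_cast Int.natCast_dvd_natCast.mpr hn

lemma upow_mem {j : ℕ} (hj : 1 ≤ j) {u : MonoidAlgebra ℤ G} (hu : u ∈ augIdeal G) :
    u ^ j ∈ augIdeal G := by
  have h := augIdeal_pow_le_pow le_rfl hj (Submodule.pow_mem_pow _ hu j)
  rwa [pow_one] at h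

lemma pow_sub_one_mem {p : ℕ} (hp : 1 ≤ p) (z : G) (q : ℕ) (c : ℤ)
    (hdvd : ∀ k, 1 ≤ k → k < p → c ∣ (q.choose k : ℤ)) :
    MonoidAlgebra.of ℤ G (z ^ q) - 1 ∈ c • augIdeal G + augIdeal G ^ p := by
  set u := MonoidAlgebra.of ℤ G z - 1 with hu_def
  have hu : u ∈ augIdeal G := of_sub_one_mem z
  have hx : MonoidAlgebra.of ℤ G (z ^ q)
      = ∑ k ∈ Finset.range (q + 1), u ^ k * ((q.choose k : ℤ) : MonoidAlgebra ℤ G) := by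
    rw [map_pow]
    have : MonoidAlgebra.of ℤ G z = u + 1 := by rw [hu_def, sub_add_cancel]
    rw [this, (Commute.one_right u).add_pow]
    refine Finset.sum_congr rfl fun k _ => ?_
    rw [one_pow, mul_one]
    push_cast
    ring
  have hterm : ∀ j : ℕ, u ^ j * ((q.choose j : ℤ) : MonoidAlgebra ℤ G)
      = ((q.choose j : ℤ)) • u ^ j := by
    intro j
    rw [zsmul_eq_mul]
    exact ((Int.cast_commute ((q.choose j : ℤ)) (u ^ j)).eq).symm
  have hsplit : MonoidAlgebra.of ℤ G (z ^ q) - 1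
      = ∑ k ∈ Finset.range q, ((q.choose (k + 1) : ℤ)) • u ^ (k + 1) := by
    rw [hx, Finset.sum_range_succ']
    simp only [pow_zero, Nat.choose_zero_right, Nat.cast_one, Int.cast_one, one_mul,
      add_sub_cancel_right]
    exact Finset.sum_congr rfl fun k _ => hterm (k + 1)
  rw [hsplit, Submodule.add_eq_sup]
  refine Submodule.sum_mem _ fun k _ => ?_
  by_cases hk : k + 1 < p
  · obtain ⟨m, hm⟩ := hdvd (k + 1) (by omega) hk
    rw [hm, mul_smul]
    exact Submodule.mem_sup_left
      (Submodule.smul_mem_pointwise_smul _ _ _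
        (Submodule.smul_mem _ _ (upow_mem (by omega) hu)))
  · refine Submodule.mem_sup_right (Submodule.smul_mem _ _ ?_)
    exact augIdeal_pow_le_pow hp (by omega) (Submodule.pow_mem_pow _ hu (k + 1))

lemma mul_mem_smul_add_pow {p : ℕ} (hp : 1 ≤ p) (c : ℤ) {j m : MonoidAlgebra ℤ G}
    (hj : j ∈ augIdeal G) (hm : m ∈ c • augIdeal G + augIdeal G ^ p) :
    j * m ∈ c • augIdeal G + augIdeal G ^ p := by
  rw [Submodule.add_eq_sup, Submodule.mem_sup] at hm ⊢
  obtain ⟨y, hy, z, hz, rfl⟩ := hm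
  obtain ⟨y', hy', rfl⟩ := Set.mem_smul_set.mp hy
  refine ⟨c • (j * y'), Submodule.smul_mem_pointwise_smul _ _ _ (augIdeal_mul_mem_left j hy'),
    j * z, ?_, ?_⟩
  · have h1 : j * z ∈ augIdeal G * augIdeal G ^ p := Submodule.mul_mem_mul hj hz
    rw [← pow_succ'] at h1
    exact augIdeal_pow_le_pow hp (by omega) h1
  · rw [mul_add, mul_smul_comm]

lemma comm_mem {p : ℕ} (hp : 1 ≤ p) (a b z : G) (q : ℕ) (c : ℤ)
    (hz : a⁻¹ * b⁻¹ * a * b = z ^ q)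
    (hdvd : ∀ k, 1 ≤ k → k < p → c ∣ (q.choose k : ℤ)) :
    MonoidAlgebra.of ℤ G a * MonoidAlgebra.of ℤ G b
      - MonoidAlgebra.of ℤ G b * MonoidAlgebra.of ℤ G a
      ∈ c • augIdeal G + augIdeal G ^ p := by
  have hgrp : (b * a) * z ^ q = a * b := by rw [← hz]; group
  have h1 : MonoidAlgebra.of ℤ G (b * a) * MonoidAlgebra.of ℤ G (z ^ q)
      = MonoidAlgebra.of ℤ G a * MonoidAlgebra.of ℤ G b := by
    rw [← map_mul, hgrp, map_mul]
  have key : MonoidAlgebra.of ℤ G a * MonoidAlgebra.of ℤ G b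
      - MonoidAlgebra.of ℤ G b * MonoidAlgebra.of ℤ G a
      = (MonoidAlgebra.of ℤ G (b * a) - 1) * (MonoidAlgebra.of ℤ G (z ^ q) - 1)
        + (MonoidAlgebra.of ℤ G (z ^ q) - 1) := by
    rw [← h1, map_mul]
    noncomm_ring
  rw [key]
  have hm := pow_sub_one_mem hp z q c hdvd
  exact Submodule.add_mem _ (mul_mem_smul_add_pow hp c (of_sub_one_mem (b * a)) hm) hm

end Main


/-- If every commutator in `G` is a `p`-th power and the commutator
`(g₁^p)⁻¹ g₂⁻¹ g₁^p g₂` is a `p²`-th power, then the ring commutator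
`(g₁−1)^p (g₂−1) − (g₂−1)(g₁−1)^p` in `ℤ[G]` lies in `p²J + J^p + J^{p²}`,
where `J` is the augmentation ideal. -/
theorem sub_one_pow_commutator_mem (p : ℕ) (hp : p.Prime) (G : Type*) [Group G]
    (hcomm : ∀ x y : G, ∃ z : G, x⁻¹ * y⁻¹ * x * y = z ^ p)
    (g₁ g₂ : G) (hcomm2 : ∃ z : G, (g₁ ^ p)⁻¹ * g₂⁻¹ * g₁ ^ p * g₂ = z ^ p ^ 2) :
    (MonoidAlgebra.of ℤ G g₁ - 1) ^ p * (MonoidAlgebra.of ℤ G g₂ - 1) -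
        (MonoidAlgebra.of ℤ G g₂ - 1) * (MonoidAlgebra.of ℤ G g₁ - 1) ^ p ∈
      ((p : ℤ) ^ 2) • augIdeal G + augIdeal G ^ p + augIdeal G ^ p ^ 2 := by
  have hp1 : 1 ≤ p := hp.pos
  set u := MonoidAlgebra.of ℤ G g₁ - 1 with hu_def
  set v := MonoidAlgebra.of ℤ G g₂ - 1 with hv_def
  have hu : u ∈ augIdeal G := of_sub_one_mem g₁
  set X := MonoidAlgebra.of ℤ G (g₁ ^ p) with hX_def
  -- dvd hypotheses
  have hdvd1 : ∀ k, 1 ≤ k → k < p → (p : ℤ) ∣ (p.choose k : ℤ) := fun k hk1 hk2 =>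
    Int.natCast_dvd_natCast.mpr (hp.dvd_choose_self (by omega) hk2)
  have hdvd2 : ∀ k, 1 ≤ k → k < p → ((p : ℤ) ^ 2) ∣ ((p ^ 2).choose k : ℤ) := fun k hk1 hk2 =>
    sq_dvd_choose hp hk1 hk2
  -- Step 1 : u ^ p - (X - 1) ∈ p • J
  have hX : X = ∑ k ∈ Finset.range (p + 1),
      u ^ k * ((p.choose k : ℤ) : MonoidAlgebra ℤ G) := by
    rw [hX_def, map_pow]
    have h : MonoidAlgebra.of ℤ G g₁ = u + 1 := by rw [hu_def, sub_add_cancel]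
    rw [h, (Commute.one_right u).add_pow]
    refine Finset.sum_congr rfl fun k _ => ?_
    rw [one_pow, mul_one]
    push_cast; ring
  have hterm : ∀ j : ℕ, u ^ j * ((p.choose j : ℤ) : MonoidAlgebra ℤ G)
      = ((p.choose j : ℤ)) • u ^ j := by
    intro j
    rw [zsmul_eq_mul]
    exact ((Int.cast_commute ((p.choose j : ℤ)) (u ^ j)).eq).symm
  have hW : u ^ p - (X - 1) ∈ (p : ℤ) • augIdeal G := by
    obtain ⟨p', rfl⟩ : ∃ p', p = p' + 1 := ⟨p - 1, by omega⟩
    have hXs : X = (∑ k ∈ Finset.range p', ((((p' + 1).choose (k + 1)) : ℤ)) • u ^ (k + 1))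
        + u ^ (p' + 1) + 1 := by
      rw [hX, Finset.sum_range_succ' _ (p' + 1), Finset.sum_range_succ]
      simp only [pow_zero, Nat.choose_zero_right, Nat.choose_self, Nat.cast_one, Int.cast_one,
        one_mul, mul_one]
      have hc : ∑ k ∈ Finset.range p', u ^ (k + 1) * ((((p' + 1).choose (k + 1)) : ℤ) :
            MonoidAlgebra ℤ G)
          = ∑ k ∈ Finset.range p', ((((p' + 1).choose (k + 1)) : ℤ)) • u ^ (k + 1) :=
        Finset.sum_congr rfl fun k _ => hterm (k + 1)
      rw [hc]
    have heq : u ^ (p' + 1) - (X - 1)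
        = -(∑ k ∈ Finset.range p', ((((p' + 1).choose (k + 1)) : ℤ)) • u ^ (k + 1)) := by
      rw [hXs]; abel
    rw [heq]
    refine Submodule.neg_mem _ (Submodule.sum_mem _ fun k hk => ?_)
    have hkr := Finset.mem_range.mp hk
    obtain ⟨m, hm⟩ := hdvd1 (k + 1) (by omega) (by omega)
    rw [hm, mul_smul]
    exact Submodule.smul_mem_pointwise_smul _ _ _
      (Submodule.smul_mem _ _ (upow_mem (by omega) hu))
  obtain ⟨w, hwJ, hwe⟩ := Set.mem_smul_set.mp hW
  -- decomposition of the commutator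
  have hup : u ^ p = (X - 1) + (p : ℤ) • w := by rw [hwe]; abel
  have hdecomp : u ^ p * v - v * u ^ p
      = (X * MonoidAlgebra.of ℤ G g₂ - MonoidAlgebra.of ℤ G g₂ * X)
        + (p : ℤ) • (w * MonoidAlgebra.of ℤ G g₂ - MonoidAlgebra.of ℤ G g₂ * w) := by
    rw [hup, hv_def]
    simp only [add_mul, mul_add, sub_mul, mul_sub, smul_mul_assoc, mul_smul_comm, smul_sub,
      mul_one, one_mul]
    module
  -- membership of the two parts in p² • J + J ^ p
  have ht1 : X * MonoidAlgebra.of ℤ G g₂ - MonoidAlgebra.of ℤ G g₂ * X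
      ∈ ((p : ℤ) ^ 2) • augIdeal G + augIdeal G ^ p := by
    obtain ⟨z, hz⟩ := hcomm2
    exact comm_mem hp1 (g₁ ^ p) g₂ z (p ^ 2) ((p : ℤ) ^ 2) hz hdvd2
  have ht2 : w * MonoidAlgebra.of ℤ G g₂ - MonoidAlgebra.of ℤ G g₂ * w
      ∈ (p : ℤ) • augIdeal G + augIdeal G ^ p := by
    -- linearity reduction to generators
    set L : MonoidAlgebra ℤ G →ₗ[ℤ] MonoidAlgebra ℤ G :=
      (LinearMap.mulRight ℤ (MonoidAlgebra.of ℤ G g₂))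
        - (LinearMap.mulLeft ℤ (MonoidAlgebra.of ℤ G g₂)) with hL_def
    have hle : augIdeal G ≤
        Submodule.comap L ((p : ℤ) • augIdeal G + augIdeal G ^ p) := by
      refine le_trans augIdeal_le_span (Submodule.span_le.mpr ?_)
      rintro x ⟨g, rfl⟩
      simp only [Submodule.mem_comap, hL_def, LinearMap.sub_apply,
        LinearMap.mulRight_apply, LinearMap.mulLeft_apply, SetLike.mem_coe]
      have hkey : (MonoidAlgebra.of ℤ G g - 1) * MonoidAlgebra.of ℤ G g₂
            - MonoidAlgebra.of ℤ G g₂ * (MonoidAlgebra.of ℤ G g - 1)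
          = MonoidAlgebra.of ℤ G g * MonoidAlgebra.of ℤ G g₂
            - MonoidAlgebra.of ℤ G g₂ * MonoidAlgebra.of ℤ G g := by noncomm_ring
      rw [hkey]
      obtain ⟨z, hz⟩ := hcomm g g₂
      exact comm_mem hp1 g g₂ z p (p : ℤ) hz hdvd1
    have := hle hwJ
    simpa [hL_def] using this
  -- p • ht2 lands in p² • J + J ^ p
  have ht2' : (p : ℤ) • (w * MonoidAlgebra.of ℤ G g₂ - MonoidAlgebra.of ℤ G g₂ * w)
      ∈ ((p : ℤ) ^ 2) • augIdeal G + augIdeal G ^ p := by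
    rw [Submodule.add_eq_sup, Submodule.mem_sup] at ht2 ⊢
    obtain ⟨y, hy, z, hz, hyz⟩ := ht2
    obtain ⟨y', hy', rfl⟩ := Set.mem_smul_set.mp hy
    refine ⟨((p : ℤ) ^ 2) • y', Submodule.smul_mem_pointwise_smul _ _ _ hy',
      (p : ℤ) • z, Submodule.smul_mem _ _ hz, ?_⟩
    rw [← hyz, smul_add, smul_smul, ← pow_two]
  -- combine
  rw [hdecomp]
  have hsum := Submodule.add_mem (((p : ℤ) ^ 2) • augIdeal G + augIdeal G ^ p) ht1 ht2'
  rw [Submodule.add_eq_sup (((p : ℤ) ^ 2) • augIdeal G + augIdeal G ^ p)]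
  exact Submodule.mem_sup_left hsum
end
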